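/- Let L be an abelian group and A = ⊕_{n∈L} A_n an L-graded commutative integral domain which is integrally closed in its fraction field (a normal domain). Then A_0 is integrally closed in its fraction field. -/

import Mathlib

/-!
A fraction `a / b` of elements of `A₀` that is integral over `A₀` is integral over `A`, so it is
some `c ∈ A` with `b * c = a`. Since `b` is homogeneous and nonzero, taking degree-zero components
of `b * c = a` shows that `c` itself is homogeneous of degree zero.
-/

open DirectSum

theorem DirectSum.mem_of_mul_mem_of_left_mem {ι σ A : Type*} [DecidableEq ι]
    [AddLeftCancelMonoid ι] [Semiring A] [IsLeftCancelMulZero A] [SetLike σ A]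
    [AddSubmonoidClass σ A] (𝒜 : ι → σ) [GradedRing 𝒜] {i j : ι} {b c : A}
    (hb : b ∈ 𝒜 i) (hb0 : b ≠ 0) (hbc : b * c ∈ 𝒜 (i + j)) : c ∈ 𝒜 j := by
  have h := coe_decompose_mul_add_of_left_mem (j := j) 𝒜 (b := c) hb
  rw [decompose_of_mem_same 𝒜 hbc] at h
  rw [mul_left_cancel₀ hb0 h]
  exact (decompose 𝒜 c j).2

theorem IsIntegrallyClosed.of_exists_algebraMap_eq_of_mul_eq {R S : Type*} [CommRing R]
    [CommRing S] [IsDomain S] [IsIntegrallyClosed S] [Algebra R S] [FaithfulSMul R S]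
    (h : ∀ (a b : R) (c : S), b ≠ 0 → algebraMap R S b * c = algebraMap R S a →
      ∃ r, algebraMap R S r = c) :
    IsIntegrallyClosed R := by
  have : IsDomain R := (FaithfulSMul.algebraMap_injective R S).isDomain _
  let L := FractionRing S
  have hinj : Function.Injective (algebraMap R L) := by
    rw [IsScalarTower.algebraMap_eq R S L]
    exact (IsFractionRing.injective S L).comp (FaithfulSMul.algebraMap_injective R S)
  let φ : FractionRing R →ₐ[R] L := IsFractionRing.liftAlgHom (g := Algebra.ofId R L) hinj
  rw [isIntegrallyClosed_iff (FractionRing R)]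
  intro x hx
  obtain ⟨a, b, hb, rfl⟩ := IsFractionRing.div_surjective (A := R) x
  obtain ⟨c, hc⟩ := IsIntegrallyClosed.algebraMap_eq_of_integral ((hx.map φ).tower_top (A := S))
  rw [map_div₀, φ.commutes, φ.commutes] at hc
  have hb0 : algebraMap R L b ≠ 0 := (map_ne_zero_iff _ hinj).mpr (nonZeroDivisors.ne_zero hb)
  obtain ⟨r, rfl⟩ := h a b c (nonZeroDivisors.ne_zero hb) <| IsFractionRing.injective S L <| by
    rw [map_mul, hc, ← IsScalarTower.algebraMap_apply, ← IsScalarTower.algebraMap_apply,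
      mul_div_cancel₀ _ hb0]
  refine ⟨r, φ.injective (show φ _ = φ _ from ?_)⟩
  rw [φ.commutes, map_div₀, φ.commutes, φ.commutes, ← hc, ← IsScalarTower.algebraMap_apply]

theorem gradeZero_isIntegrallyClosed {L A : Type*} [AddCommGroup L] [DecidableEq L] [CommRing A]
    (𝒜 : L → AddSubgroup A) [GradedRing 𝒜] [IsDomain A] [IsIntegrallyClosed A] :
    IsIntegrallyClosed (𝒜 0) := by
  have : FaithfulSMul (𝒜 0) A :=
    (faithfulSMul_iff_algebraMap_injective _ _).mpr Subtype.coe_injective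
  refine .of_exists_algebraMap_eq_of_mul_eq (S := A) fun a b c hb hbc => ?_
  have hbc₀ : (b : A) * c ∈ 𝒜 (0 + 0) := by
    rw [add_zero]
    exact hbc ▸ a.2
  have hb₀ : (b : A) ≠ 0 := fun h => hb (Subtype.ext h)
  exact ⟨⟨c, mem_of_mul_mem_of_left_mem 𝒜 b.2 hb₀ hbc₀⟩, rfl⟩
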